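/- arXiv:2511.16705 — 5 statements merged into one kernel-verified Lean document; each statement's English description precedes it below -/
import Mathlib

section
/- Singular equality is transitive: for all names A, B, C, if singular_equality A B and singular_equality B C then singular_equality A C. -/
theorem singular_equality_transitive {N : Type*} (eps : N → N → Prop)
    (singular_equality : N → N → Prop)
    (hax : ∀ A a, eps A a ↔ ((∃ B, eps B A) ∧ (∀ C D, eps C A ∧ eps D A → eps C D) ∧
      (∀ C, eps C A → eps C a)))
    (hse : ∀ A B, singular_equality A B ↔ (eps A B ∧ eps B A)) :
    ∀ A B C, singular_equality A B → singular_equality B C → singular_equality A C := by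
  intro A B C hAB hBC
  obtain ⟨hAB1, hBA⟩ := (hse A B).mp hAB
  obtain ⟨hBC1, hCB⟩ := (hse B C).mp hBC
  exact (hse A C).mpr ⟨((hax B C).mp hBC1).2.2 A hAB1, ((hax B A).mp hBA).2.2 C hCB⟩
end

section
/- The class operator is idempotent (part 1): for all names A and a, if A ε Kl a then A ε Kl (Kl a). -/
theorem Kl_idempotent_one {N : Type*} (eps : N → N → Prop)
    (singular_equality : N → N → Prop) (pt el Kl : N → N)
    (hax : ∀ A a, eps A a ↔ ((∃ B, eps B A) ∧ (∀ C D, eps C A ∧ eps D A → eps C D) ∧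
      (∀ C, eps C A → eps C a)))
    (hse : ∀ A B, singular_equality A B ↔ (eps A B ∧ eps B A))
    (hasym : ∀ A B, eps A (pt B) → ¬ eps B (pt A))
    (htrans : ∀ A B C, eps A (pt B) → eps B (pt C) → eps A (pt C))
    (MD1 : ∀ A B, eps A (el B) ↔ (eps A A ∧ (singular_equality A B ∨ eps A (pt B))))
    (MD2 : ∀ A a, eps A (Kl a) ↔ (eps A A ∧ (∃ B, eps B a) ∧ (∀ B, eps B a → eps B (el A)) ∧
      (∀ B, eps B (el A) → ∃ C D, eps C a ∧ eps D (el C) ∧ eps D (el B))))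
    (A3 : ∀ A B a, eps A (Kl a) ∧ eps B (Kl a) → singular_equality A B)
    (A4 : ∀ A a, eps A a → ∃ B, eps B (Kl a)) :
    ∀ A a, eps A (Kl a) → eps A (Kl (Kl a)) := by
  intro A a hA
  have hAA := ((MD2 A a).mp hA).1
  refine (MD2 A (Kl a)).mpr ⟨hAA, ⟨A, hA⟩, ?_, ?_⟩
  · intro B hB
    have hBB := ((MD2 B a).mp hB).1
    exact (MD1 B A).mpr ⟨hBB, Or.inl (A3 B A a ⟨hB, hA⟩)⟩
  · intro B hB
    have hBB := ((MD1 B A).mp hB).1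
    exact ⟨A, B, hA, hB, (MD1 B B).mpr ⟨hBB, Or.inl ((hse B B).mpr ⟨hBB, hBB⟩)⟩⟩
end

section
/- The class operator is idempotent (part 2): for all names A and a, if A ε Kl (Kl a) then A ε Kl a. -/
theorem Kl_idempotent_two {N : Type*} (eps : N → N → Prop)
    (singular_equality : N → N → Prop) (pt el Kl : N → N)
    (hax : ∀ A a, eps A a ↔ ((∃ B, eps B A) ∧ (∀ C D, eps C A ∧ eps D A → eps C D) ∧
      (∀ C, eps C A → eps C a)))
    (hse : ∀ A B, singular_equality A B ↔ (eps A B ∧ eps B A))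
    (hasym : ∀ A B, eps A (pt B) → ¬ eps B (pt A))
    (htrans : ∀ A B C, eps A (pt B) → eps B (pt C) → eps A (pt C))
    (MD1 : ∀ A B, eps A (el B) ↔ (eps A A ∧ (singular_equality A B ∨ eps A (pt B))))
    (MD2 : ∀ A a, eps A (Kl a) ↔ (eps A A ∧ (∃ B, eps B a) ∧ (∀ B, eps B a → eps B (el A)) ∧
      (∀ B, eps B (el A) → ∃ C D, eps C a ∧ eps D (el C) ∧ eps D (el B))))
    (A3 : ∀ A B a, eps A (Kl a) ∧ eps B (Kl a) → singular_equality A B)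
    (A4 : ∀ A a, eps A a → ∃ B, eps B (Kl a)) :
    ∀ A a, eps A (Kl (Kl a)) → eps A (Kl a) := by
  -- transfer: eps Y n → eps X Y → eps X n
  have transfer : ∀ X Y n, eps Y n → eps X Y → eps X n := by
    intro X Y n hYn hXY
    exact ((hax Y n).1 hYn).2.2 X hXY
  intro A a hA
  obtain ⟨hAA, ⟨B, hB⟩, hall, hcov⟩ := (MD2 A (Kl a)).1 hA
  -- B ε Kl a; show B ε Kl (Kl a)
  have hBB : eps B B := ((MD2 B a).1 hB).1
  have hBKlKl : eps B (Kl (Kl a)) := by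
    refine (MD2 B (Kl a)).2 ⟨hBB, ⟨B, hB⟩, ?_, ?_⟩
    · intro X hX
      have hXX : eps X X := ((MD2 X a).1 hX).1
      exact (MD1 X B).2 ⟨hXX, Or.inl (A3 X B a ⟨hX, hB⟩)⟩
    · intro X hX
      have hXX : eps X X := ((MD1 X B).1 hX).1
      exact ⟨B, X, hB, hX, (MD1 X X).2 ⟨hXX, Or.inl ((hse X X).2 ⟨hXX, hXX⟩)⟩⟩
  have hAB : eps A B := ((hse A B).1 (A3 A B (Kl a) ⟨hA, hBKlKl⟩)).1
  exact transfer A B (Kl a) hB hAB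
end

section
/- Being an element coincides with being a sub-collection: for all names A and B, B ε el A if and only if B ε subcoll A. -/
theorem el_iff_subcoll {N : Type*} (eps : N → N → Prop)
    (singular_equality : N → N → Prop) (pt el Kl subcoll : N → N)
    (hax : ∀ A a, eps A a ↔ ((∃ B, eps B A) ∧ (∀ C D, eps C A ∧ eps D A → eps C D) ∧
      (∀ C, eps C A → eps C a)))
    (hse : ∀ A B, singular_equality A B ↔ (eps A B ∧ eps B A))
    (hasym : ∀ A B, eps A (pt B) → ¬ eps B (pt A))
    (htrans : ∀ A B C, eps A (pt B) → eps B (pt C) → eps A (pt C))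
    (MD1 : ∀ A B, eps A (el B) ↔ (eps A A ∧ (singular_equality A B ∨ eps A (pt B))))
    (MD2 : ∀ A a, eps A (Kl a) ↔ (eps A A ∧ (∃ B, eps B a) ∧ (∀ B, eps B a → eps B (el A)) ∧
      (∀ B, eps B (el A) → ∃ C D, eps C a ∧ eps D (el C) ∧ eps D (el B))))
    (A3 : ∀ A B a, eps A (Kl a) ∧ eps B (Kl a) → singular_equality A B)
    (A4 : ∀ A a, eps A a → ∃ B, eps B (Kl a))
    (hsub : ∀ A B, eps B (subcoll A) ↔ (eps B B ∧ ∀ C, eps C (el B) → eps C (el A))) :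
    ∀ A B, eps B (el A) ↔ eps B (subcoll A) := by
  -- transitivity of ε
  have teps : ∀ X Y Z, eps X Y → eps Y Z → eps X Z := by
    intro X Y Z hXY hYZ
    rcases (hax X Y).mp hXY with ⟨hne, hun, hsubXY⟩
    rcases (hax Y Z).mp hYZ with ⟨_, _, hsubYZ⟩
    exact (hax X Z).mpr ⟨hne, hun, fun C hC => hsubYZ C (hsubXY C hC)⟩
  -- reflexivity from any ε fact
  have reps : ∀ X Y, eps X Y → eps X X := by
    intro X Y hXY
    rcases (hax X Y).mp hXY with ⟨hne, hun, _⟩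
    exact (hax X X).mpr ⟨hne, hun, fun C hC => hC⟩
  intro A B
  constructor
  · intro hBel
    rcases (MD1 B A).mp hBel with ⟨hBB, hcase⟩
    rcases hcase with hseq | hpt
    · rcases (hse B A).mp hseq with ⟨hBA, hAB⟩
      have hAA : eps A A := reps A B hAB
      have hAsub : eps A (subcoll A) := (hsub A A).mpr ⟨hAA, fun C hC => hC⟩
      exact teps B A (subcoll A) hBA hAsub
    · refine (hsub A B).mpr ⟨hBB, ?_⟩
      intro C hCelB
      rcases (MD1 C B).mp hCelB with ⟨hCC, hc⟩
      refine (MD1 C A).mpr ⟨hCC, Or.inr ?_⟩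
      rcases hc with hseq | hCpt
      · exact teps C B (pt A) ((hse C B).mp hseq).1 hpt
      · exact htrans C B A hCpt hpt
  · intro hBsub
    rcases (hsub A B).mp hBsub with ⟨hBB, hsubBA⟩
    have hBelB : eps B (el B) :=
      (MD1 B B).mpr ⟨hBB, Or.inl ((hse B B).mpr ⟨hBB, hBB⟩)⟩
    exact hsubBA B hBelB
end

section
/- Tarski's axiom that parts of solids are solids is derivable (TA4'): for all names A, B, if A ε solids and B ε el A, then B ε solids. -/
theorem TA4' {N : Type*} (eps : N → N → Prop)
    (singular_equality : N → N → Prop) (pt el coll subcoll : N → N) (balls solids : N)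
    (hax : ∀ A a, eps A a ↔ ((∃ B, eps B A) ∧ (∀ C D, eps C A ∧ eps D A → eps C D) ∧
      (∀ C, eps C A → eps C a)))
    (MD1 : ∀ A B, eps A (el B) ↔ (eps A A ∧ (singular_equality A B ∨ eps A (pt B))))
    (MD3 : ∀ P a, eps P (coll a) ↔ (eps P P ∧ ∀ Q, eps Q (el P) →
      ∃ C D, eps C a ∧ eps C (el P) ∧ eps D (el C) ∧ eps D (el Q)))
    (MereoT44 : ∀ A B, eps B (subcoll A) ↔ eps B (el A))
    (TarskiD8 : ∀ A, eps A solids ↔ ∃ C, eps C C ∧ eps C (coll balls) ∧ eps A (subcoll C))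
    (htranssub : ∀ A B C, eps B (subcoll A) → eps A (subcoll C) → eps B (subcoll C)) :
    ∀ A B, (eps A solids ∧ eps B (el A)) → eps B solids := by
  intro A B ⟨hA, hB⟩
  obtain ⟨C, hCC, hCcoll, hAsub⟩ := (TarskiD8 A).mp hA
  exact (TarskiD8 B).mpr ⟨C, hCC, hCcoll, htranssub A B C ((MereoT44 A B).mpr hB) hAsub⟩
end
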